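/- arXiv:1607.00668 — 2 statements merged into one kernel-verified Lean document; each statement's English description precedes it below -/
import Mathlib

section
/- Every prerigid monomorphism between augmented directed complexes with bases is rigid: if f : K → L is an injective morphism of augmented directed complexes with bases sending basis elements to basis elements, then for every basis element b of K and all ε ∈ {0,1} and 0 ≤ k ≤ |b|, one has f(⟨b⟩^ε_k) = ⟨f(b)⟩^ε_k. -/
/-!
A prerigid monomorphism is, degreewise, the map of free abelian groups induced by an
embedding of the bases. Such a map commutes with taking positive and negative parts, and
every morphism commutes with the differential, so by induction down the table it carries
`⟨b⟩^ε_k` to `⟨φ b⟩^ε_k`.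
-/

noncomputable section

/-- An augmented directed complex *with basis*, presented in the free model:
the degree-`n` part is the free abelian group `B n →₀ ℤ` on the basis `B n`,
and the positivity submonoid is the set of `ℕ`-linear combinations of basis
elements (i.e. the finitely supported functions with non-negative values). -/
structure BCx where
  B : ℕ → Type
  d : ∀ n, (B (n + 1) →₀ ℤ) →+ (B n →₀ ℤ)
  e : (B 0 →₀ ℤ) →+ ℤ
  dd : ∀ n x, d n (d (n + 1) x) = 0
  ed : ∀ x, e (d 0 x) = 0

/-- The free abelian group in degree `n`. -/
abbrev BCx.Fr (K : BCx) (n : ℕ) : Type := K.B n →₀ ℤ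

/-- The positive part `x₊` of an element of a free abelian group with chosen
basis. -/
def fPos {α : Type} (x : α →₀ ℤ) : α →₀ ℤ :=
  x.mapRange (fun c => max c 0) (by simp)

/-- The negative part `x₋` (so that `x = x₊ - x₋` with disjoint supports). -/
def fNeg {α : Type} (x : α →₀ ℤ) : α →₀ ℤ :=
  x.mapRange (fun c => max (-c) 0) (by simp)

/-- `part true = (·)₊`, `part false = (·)₋`. -/
def part (ε : Bool) {α : Type} (x : α →₀ ℤ) : α →₀ ℤ :=
  if ε then fPos x else fNeg x

/-- Membership in the positivity submonoid (`ℕ`-combinations of the basis). -/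
def Nonneg {α : Type} (x : α →₀ ℤ) : Prop := ∀ a, 0 ≤ x a

/-- The differential, extended by `0` in degree `0`. -/
def BCx.DD (K : BCx) : ∀ n, K.Fr n →+ K.Fr (n - 1)
  | 0 => 0
  | n + 1 => K.d n

/-- The table `⟨x⟩` of Steiner, by downward recursion: `m` steps below the
degree `i` of the homogeneous element `x`, i.e. `K.tbl i ε x m = ⟨x⟩^ε_{i-m}`,
with `⟨x⟩^ε_i = x`, `⟨x⟩^0_{k-1} = d(⟨x⟩^0_k)₋` and
`⟨x⟩^1_{k-1} = d(⟨x⟩^1_k)₊`  (`ε = false ↔ 0`, `ε = true ↔ 1`). -/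
def BCx.tbl (K : BCx) (i : ℕ) (ε : Bool) (x : K.Fr i) : ∀ m : ℕ, K.Fr (i - m)
  | 0 => x
  | m + 1 => part ε (K.DD (i - m) (K.tbl i ε x m))

/-- The table `⟨x⟩^ε_k` indexed by the target degree `k` (equal to `0` for
`k > i = |x|`). -/
def BCx.tblAt (K : BCx) (i : ℕ) (ε : Bool) (x : K.Fr i) (k : ℕ) : K.Fr k :=
  if h : k ≤ i then cast (congrArg K.Fr (Nat.sub_sub_self h)) (K.tbl i ε x (i - k))
  else 0

/-- Morphisms of augmented directed complexes with bases (in the free model):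
compatibility with differentials and augmentations, and preservation of the
positivity submonoids. -/
structure BHom (K L : BCx) where
  f : ∀ n, K.Fr n →+ L.Fr n
  comm_d : ∀ n x, f n (K.d n x) = L.d n (f (n + 1) x)
  comm_e : ∀ x, L.e (f 0 x) = K.e x
  map_pos : ∀ n x, Nonneg x → Nonneg (f n x)

/-- A morphism is *prerigid* if it sends each basis element to a basis
element. -/
def BHom.Prerigid {K L : BCx} (φ : BHom K L) : Prop :=
  ∀ (n : ℕ) (b : K.B n), ∃ b', φ.f n (Finsupp.single b 1) = Finsupp.single b' 1

/-- A morphism is *rigid* if it is prerigid and moreover preserves the tables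
of basis elements: `f(⟨b⟩^ε_k) = ⟨f(b)⟩^ε_k` for `0 ≤ k ≤ |b|`. -/
def BHom.Rigid {K L : BCx} (φ : BHom K L) : Prop :=
  φ.Prerigid ∧
  ∀ (i : ℕ) (b : K.B i) (ε : Bool) (k : ℕ), k ≤ i →
    φ.f k (K.tblAt i ε (Finsupp.single b 1) k) =
      L.tblAt i ε (φ.f i (Finsupp.single b 1)) k

open Finsupp Function

theorem part_embDomain {α β : Type} (e : α ↪ β) (ε : Bool) (x : α →₀ ℤ) :
    part ε (embDomain e x) = embDomain e (part ε x) := by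
  cases ε <;> exact (embDomain_mapRange _ _ _ (by simp)).symm

theorem AddMonoidHom.exists_embedding_eq_embDomain {α β : Type}
    (f : (α →₀ ℤ) →+ (β →₀ ℤ)) (hf : Injective f)
    (hsingle : ∀ a, ∃ b, f (Finsupp.single a 1) = Finsupp.single b 1) :
    ∃ e : α ↪ β, ∀ x, f x = embDomain e x := by
  choose g hg using hsingle
  have hg_inj : Injective g := fun a a' h =>
    single_left_injective one_ne_zero (hf (by rw [hg, hg, h]))
  let e : α ↪ β := ⟨g, hg_inj⟩
  have hfe : f = embDomain.addMonoidHom e := addHom_ext fun a c => by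
    rw [← smul_single_one, map_zsmul, hg]
    simp [e, embDomain_single]
  exact ⟨e, DFunLike.congr_fun hfe⟩

namespace BHom

variable {K L : BCx} (φ : BHom K L)

theorem map_DD (n : ℕ) (x : K.Fr n) : φ.f (n - 1) (K.DD n x) = L.DD n (φ.f n x) := by
  cases n with
  | zero => simp [BCx.DD]
  | succ n => exact φ.comm_d n x

theorem map_cast {n m : ℕ} (h : n = m) (x : K.Fr n) :
    φ.f m (cast (congrArg K.Fr h) x) = cast (congrArg L.Fr h) (φ.f n x) := by
  subst h
  rfl

theorem map_part_of_prerigid (hmono : ∀ n, Injective (φ.f n)) (hpre : φ.Prerigid)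
    (n : ℕ) (ε : Bool) (x : K.Fr n) : φ.f n (part ε x) = part ε (φ.f n x) := by
  obtain ⟨e, he⟩ := (φ.f n).exists_embedding_eq_embDomain (hmono n) (hpre n)
  rw [he, he, part_embDomain]

variable {φ}

theorem map_tbl (hpart : ∀ n ε (x : K.Fr n), φ.f n (part ε x) = part ε (φ.f n x))
    (i : ℕ) (ε : Bool) (x : K.Fr i) (m : ℕ) :
    φ.f (i - m) (K.tbl i ε x m) = L.tbl i ε (φ.f i x) m := by
  induction m with
  | zero => rfl
  | succ m ih =>
    change φ.f (i - m - 1) _ = _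
    rw [BCx.tbl, BCx.tbl, hpart, map_DD, ih]

theorem map_tblAt (hpart : ∀ n ε (x : K.Fr n), φ.f n (part ε x) = part ε (φ.f n x))
    (i : ℕ) (ε : Bool) (x : K.Fr i) (k : ℕ) :
    φ.f k (K.tblAt i ε x k) = L.tblAt i ε (φ.f i x) k := by
  unfold BCx.tblAt
  split_ifs with hk
  · rw [map_cast _ (Nat.sub_sub_self hk), map_tbl hpart]
  · exact map_zero _

end BHom

/-- Every prerigid monomorphism between augmented directed
complexes with bases is rigid: if `φ : K → L` is injective and sends basis
elements to basis elements, then for every basis element `b` of degree `i`,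
every `ε ∈ {0,1}` and every `0 ≤ k ≤ i`, one has
`φ(⟨b⟩^ε_k) = ⟨φ(b)⟩^ε_k`. -/
theorem statement5 (K L : BCx) (φ : BHom K L)
    (hmono : ∀ n, Function.Injective (φ.f n)) (hpre : φ.Prerigid) : φ.Rigid :=
  ⟨hpre, fun _ _ _ k _ => BHom.map_tblAt (φ.map_part_of_prerigid hmono hpre) _ _ _ k⟩

end
end

section
/- Let f, g : K → L and f', g' : L → M be morphisms of augmented directed complexes, h an antihomotopy from f to g and h' an antihomotopy from f' to g'. Then the family (h'h)_i = h'_{i+1} ∘ h_i defines a 2-antihomotopy from g'h + h'f to h'g + f'h; that is, for all i ≥ 0 (with conventions (h'h)_{-1} = 0, d_0 = e): d_{i+2}(h'h)_i − (h'h)_{i-1}d_i = (-1)^i((h'_i g_i + f'_{i+1}h_i) − (g'_{i+1}h_i + h'_i f_i)), and (h'h)_i(K*_i) ⊆ M*_{i+2}. -/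
/-! Push the differential through `h'` and then through `h`,
`d(h'h) = (h'd ± (g' - f'))h = h'(hd ± (g - f)) ± (g' - f')h`.
The two signs are opposite, since `h'` is applied one degree higher than `h`. -/

/-- An *augmented directed complex*: a chain complex of abelian groups in
non-negative degrees (`d n : X (n+1) →+ X n`), with an augmentation
`e : X 0 →+ ℤ` satisfying `e ∘ d₁ = 0`, and a positivity submonoid in each
degree. -/
structure ADC where
  X : ℕ → Type
  [inst : ∀ n, AddCommGroup (X n)]
  d : ∀ n, X (n + 1) →+ X n
  e : X 0 →+ ℤ
  dd : ∀ n x, d n (d (n + 1) x) = 0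
  ed : ∀ x, e (d 0 x) = 0
  pos : ∀ n, AddSubmonoid (X n)

attribute [instance] ADC.inst

/-- Morphisms of augmented directed complexes: chain maps compatible with the
augmentations and preserving the positivity submonoids. -/
structure ADCHom (K L : ADC) where
  f : ∀ n, K.X n →+ L.X n
  comm_d : ∀ n x, f n (K.d n x) = L.d n (f (n + 1) x)
  comm_e : ∀ x, L.e (f 0 x) = K.e x
  map_pos : ∀ n x, x ∈ K.pos n → f n x ∈ L.pos n

def ADCHom.id (K : ADC) : ADCHom K K where
  f _ := AddMonoidHom.id _
  comm_d _ _ := rfl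
  comm_e _ := rfl
  map_pos _ _ hx := hx

def ADCHom.comp {K L M : ADC} (ψ : ADCHom L M) (φ : ADCHom K L) : ADCHom K M where
  f n := (ψ.f n).comp (φ.f n)
  comm_d n x := by
    simp only [AddMonoidHom.comp_apply]
    rw [φ.comm_d, ψ.comm_d]
  comm_e x := by
    simp only [AddMonoidHom.comp_apply]
    rw [ψ.comm_e, φ.comm_e]
  map_pos n x hx := ψ.map_pos n _ (φ.map_pos n x hx)

/-- The carrier of the suspension of `K` : `ℤ` in degree `0` and `K.X n` in
degree `n+1`.  Equivalently, this is the family `K_{n-1}` (with `K_{-1} = ℤ`)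
indexed by `n`. -/
def ADC.S (K : ADC) : ℕ → Type
  | 0 => ℤ
  | n + 1 => K.X n

instance ADC.instSAdd (K : ADC) : ∀ n, AddCommGroup (K.S n)
  | 0 => inferInstanceAs (AddCommGroup ℤ)
  | n + 1 => inferInstanceAs (AddCommGroup (K.X n))

/-- The differential of the suspension : in lowest degree it is the
augmentation (`d₀ = e` convention), in higher degrees the differential of `K`. -/
def ADC.Sd (K : ADC) : ∀ n, K.S (n + 1) →+ K.S n
  | 0 => K.e
  | n + 1 => K.d n

/-- The positivity submonoids of the suspension : `ℕ ⊆ ℤ` in degree `0`. -/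
noncomputable def ADC.Spos (K : ADC) : ∀ n, AddSubmonoid (K.S n)
  | 0 => AddSubmonoid.nonneg ℤ
  | n + 1 => K.pos n

/-- The suspension of a morphism (the identity of `ℤ` in degree `0`). -/
def ADCHom.Sf {K L : ADC} (φ : ADCHom K L) : ∀ n, K.S n →+ L.S n
  | 0 => AddMonoidHom.id ℤ
  | n + 1 => φ.f n
/-- An *antihomotopy* from `a` to `b` (two morphisms `K → L` of augmented
directed complexes): a family `h_i : K_i →+ L_{i+1}` satisfying
`d_{i+1} h_i - h_{i-1} d_i = (-1)^i (b_i - a_i)` (with the conventions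
`h_{-1} = 0` and `d_0 = e`, so that for `i = 0` one gets
`d_1 h_0 = b_0 - a_0`), and preserving positivity. -/
structure Antihtpy {K L : ADC} (a b : ADCHom K L) where
  h : ∀ i, K.X i →+ L.X (i + 1)
  cond0 : ∀ x, L.d 0 (h 0 x) = b.f 0 x - a.f 0 x
  cond : ∀ i x, L.d (i + 1) (h (i + 1) x) - h i (K.d i x) =
    ((-1 : ℤ) ^ (i + 1)) • (b.f (i + 1) x - a.f (i + 1) x)
  map_pos : ∀ i x, x ∈ K.pos i → h i x ∈ L.pos (i + 1)

/-- An augmented directed complex is *decent* if the augmentation is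
non-negative on the degree-`0` positivity submonoid. -/
def ADC.Decent (L : ADC) : Prop := ∀ x ∈ L.pos 0, 0 ≤ L.e x

theorem Antihtpy.d_h_succ {K L : ADC} {a b : ADCHom K L} (h : Antihtpy a b) (i : ℕ)
    (x : K.X (i + 1)) :
    L.d (i + 1) (h.h (i + 1) x) =
      h.h i (K.d i x) + ((-1 : ℤ) ^ (i + 1)) • (b.f (i + 1) x - a.f (i + 1) x) :=
  sub_eq_iff_eq_add'.mp (h.cond i x)

/-- Let `f, g : K → L` and `f', g' : L → M` be morphisms of
augmented directed complexes, `h` an antihomotopy from `f` to `g` and `h'` an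
antihomotopy from `f'` to `g'`.  Then the family `(h'h)_i = h'_{i+1} ∘ h_i`
defines a 2-antihomotopy from `g'h + h'f` to `h'g + f'h`: for all `i ≥ 0`
(with `(h'h)_{-1} = 0`, `d_0 = e`),
`d_{i+2}(h'h)_i - (h'h)_{i-1} d_i = (-1)^i ((h'_i g_i + f'_{i+1} h_i) - (g'_{i+1} h_i + h'_i f_i))`,
and `(h'h)_i (K*_i) ⊆ M*_{i+2}`. -/
theorem statement18 (K L M : ADC) (f g : ADCHom K L) (f' g' : ADCHom L M)
    (h : Antihtpy f g) (h' : Antihtpy f' g') :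
    (∀ x : K.X 0, M.d 1 (h'.h 1 (h.h 0 x)) =
      (h'.h 0 (g.f 0 x) + f'.f 1 (h.h 0 x)) -
        (g'.f 1 (h.h 0 x) + h'.h 0 (f.f 0 x))) ∧
    (∀ (i : ℕ) (x : K.X (i + 1)),
      M.d (i + 2) (h'.h (i + 2) (h.h (i + 1) x)) - h'.h (i + 1) (h.h i (K.d i x)) =
        ((-1 : ℤ) ^ (i + 1)) •
          ((h'.h (i + 1) (g.f (i + 1) x) + f'.f (i + 2) (h.h (i + 1) x)) -
            (g'.f (i + 2) (h.h (i + 1) x) + h'.h (i + 1) (f.f (i + 1) x)))) ∧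
    (∀ (i : ℕ) (x : K.X i), x ∈ K.pos i → h'.h (i + 1) (h.h i x) ∈ M.pos (i + 2)) := by
  refine ⟨fun x => ?_, fun i x => ?_, fun i x hx => ?_⟩
  · rw [h'.d_h_succ, h.cond0, map_sub]
    module
  · rw [h'.d_h_succ, h.d_h_succ, map_add, map_zsmul, map_sub]
    module
  · exact h'.map_pos (i + 1) _ (h.map_pos i x hx)
end
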